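/- arXiv:math/0605690 — 3 statements merged into one kernel-verified Lean document; each statement's English description precedes it below -/
import Mathlib

section
/- Let x, y ∈ Matrix (Fin n) (Fin d) k. If there exists F ∈ ^H k[M_{n,d}] with F(x) ≠ F(y) (evaluation at the matrix entries), then there exists f ∈ GL_d * j(^H k[M_{n,n}]) with f(x) ≠ f(y). (Theorem 7, case Z = {0}.) -/
/-!
If all polarized invariants agree at `x` and `y`, then `F (x * M) = F (y * M)` for every
`d × d` matrix `M` of rank at most `n`: such an `M` factors as `g.submatrix id castLE * b` with
`g ∈ GL_d`, and `z ↦ F (z * b)` is an `H`-invariant of `n` vectors whose polarization by `g` is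
`z ↦ F (z * M)`.

It remains to pass from `x` to `y` by such moves. Let `P` be the projection along `ker x` onto a
complement of `ker x` that contains a complement of `ker x ⊓ ker y` in `ker y`; then `x * P = x`,
`rank P = rank x`, and `P` maps `ker y` into itself. With `Q` of rank `rank y` and `y * Q = y`,
this gives `y * P * Q = y * P`, hence
`F x = F (x P) = F (y P) = F (y P Q) = F (x P Q) = F (x Q) = F (y Q) = F y`.
-/

open MvPolynomial

/-- The action of `g ∈ GL_d(k)` on `k[M_{n,d}]` by `(g * F)(x) = F(x·g)`,
i.e. substituting `X(i,q) ↦ Σ_s X(i,s)·g(s,q)`. -/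
noncomputable def colAct {k : Type*} [Field k] {n d : ℕ} (g : GL (Fin d) k) :
    MvPolynomial (Fin n × Fin d) k →ₐ[k] MvPolynomial (Fin n × Fin d) k :=
  aeval fun p => ∑ s : Fin d, X (p.1, s) * C ((g : Matrix (Fin d) (Fin d) k) s p.2)

/-- The action of `h ∈ GL_n(k)` on `k[M_{n,d}]` by `(h · F)(x) = F(h⁻¹·x)`,
i.e. substituting `X(i,q) ↦ Σ_s (h⁻¹)(i,s)·X(s,q)`. -/
noncomputable def rowAct {k : Type*} [Field k] {n d : ℕ} (h : GL (Fin n) k) :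
    MvPolynomial (Fin n × Fin d) k →ₐ[k] MvPolynomial (Fin n × Fin d) k :=
  aeval fun p =>
    ∑ s : Fin n, C (((h⁻¹ : GL (Fin n) k) : Matrix (Fin n) (Fin n) k) p.1 s) * X (s, p.2)

/-- The embedding `j : k[M_{n,n}] → k[M_{n,d}]`, `X(i,q) ↦ X(i,q)`. -/
noncomputable def jmap {k : Type*} [Field k] {n d : ℕ} (hnd : n ≤ d) :
    MvPolynomial (Fin n × Fin n) k →ₐ[k] MvPolynomial (Fin n × Fin d) k :=
  aeval fun p => X (p.1, Fin.castLE hnd p.2)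

/-- `^H k[M_{n,d}]`, the subalgebra of `H`-invariant polynomials. -/
def HinvAlg {k : Type*} [Field k] {n d : ℕ} (H : Subgroup (GL (Fin n) k)) :
    Subalgebra k (MvPolynomial (Fin n × Fin d) k) where
  carrier := {F | ∀ h ∈ H, rowAct h F = F}
  mul_mem' := fun ha hb h hh => by rw [map_mul, ha h hh, hb h hh]
  add_mem' := fun ha hb h hh => by rw [map_add, ha h hh, hb h hh]
  algebraMap_mem' := fun r h hh => by simp

/-- `GL_d * j(^H k[M_{n,n}])`: the `k`-subalgebra of `k[M_{n,d}]` generated by all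
polarizations `g * (j f)` of `H`-invariants of `n` vectors. -/
noncomputable def polarized {k : Type*} [Field k] {n d : ℕ} (hnd : n ≤ d)
    (H : Subgroup (GL (Fin n) k)) : Subalgebra k (MvPolynomial (Fin n × Fin d) k) :=
  Algebra.adjoin k
    {F | ∃ g : GL (Fin d) k, ∃ f ∈ HinvAlg (d := n) H, F = colAct g (jmap hnd f)}

theorem IsModularLattice.exists_isCompl_le_inf_sup_inf {α : Type*} [Lattice α] [BoundedOrder α]
    [IsModularLattice α] [ComplementedLattice α] (a b : α) :
    ∃ c, IsCompl c a ∧ b ≤ b ⊓ a ⊔ b ⊓ c := by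
  obtain ⟨b', hdisj, hsup⟩ := exists_disjoint_and_sup_eq (inf_le_left : b ⊓ a ≤ b)
  have hb' : b' ≤ b := hsup ▸ le_sup_right
  have : Disjoint b' a := by
    rw [disjoint_iff_inf_le]
    calc b' ⊓ a ≤ b ⊓ a ⊓ b' := le_inf (inf_le_inf_right a hb') inf_le_left
      _ = ⊥ := hdisj.eq_bot
  obtain ⟨c, hb'c, hc⟩ := this.exists_isCompl
  exact ⟨c, hc, hsup.ge.trans (sup_le_sup_left (le_inf hb' hb'c) _)⟩

namespace Submodule

open Module

variable {k V : Type*} [Field k] [AddCommGroup V] [Module k V]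

theorem exists_isCompl_projection_mem (K₁ K₂ : Submodule k V) :
    ∃ (C : Submodule k V) (hC : IsCompl C K₁), ∀ v ∈ K₂, C.projection K₁ hC v ∈ K₂ := by
  obtain ⟨C, hC, hK₂⟩ := IsModularLattice.exists_isCompl_le_inf_sup_inf K₁ K₂
  refine ⟨C, hC, fun v hv => ?_⟩
  obtain ⟨u, hu, w, hw, rfl⟩ := mem_sup.1 (hK₂ hv)
  rw [map_add, projection_apply_of_mem_right hC (mem_inf.1 hu).2,
    projection_apply_of_mem_left hC (mem_inf.1 hw).2, zero_add]
  exact (mem_inf.1 hw).1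

theorem exists_le_map_linearEquiv [FiniteDimensional k V] {W W₀ : Submodule k V}
    (h : finrank k W ≤ finrank k W₀) : ∃ g : V ≃ₗ[k] V, W ≤ W₀.map (g : V →ₗ[k] V) := by
  obtain ⟨f, hf⟩ := exists_linearIndependent_of_le_finrank h
  set W₁ := span k (Set.range (W₀.subtype ∘ f))
  have hW₁ : finrank k W₁ = finrank k W := by
    rw [finrank_span_eq_card (hf.map' _ W₀.ker_subtype), Fintype.card_fin]
  have hW₁W₀ : W₁ ≤ W₀ := span_le.2 <| Set.range_subset_iff.2 fun i => (f i).2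
  obtain ⟨g, hg⟩ := exists_linearEquiv_restrict_eq (LinearEquiv.ofFinrankEq W₁ W hW₁)
  refine ⟨g, fun w hw => ⟨_, hW₁W₀ ((LinearEquiv.ofFinrankEq W₁ W hW₁).symm ⟨w, hw⟩).2, ?_⟩⟩
  simp [← hg]

end Submodule

section Matrix

open Matrix

variable {k : Type*} [Field k] {m n o ι κ : Type*}

theorem Matrix.exists_mul_eq_self_preserving_ker [Fintype n] [DecidableEq n]
    (x y : Matrix m n k) :
    ∃ P : Matrix n n k, P.rank = x.rank ∧ x * P = x ∧
      ∀ Q : Matrix n n k, y * Q = y → y * P * Q = y * P := by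
  obtain ⟨C, hC, hker⟩ := Submodule.exists_isCompl_projection_mem
    (LinearMap.ker x.mulVecLin) (LinearMap.ker y.mulVecLin)
  set p := C.projection _ hC
  have hp : (LinearMap.toMatrix' p).mulVecLin = p := by
    rw [← toLin'_apply', toLin'_toMatrix']
  refine ⟨LinearMap.toMatrix' p, ?_, ?_, fun Q hQ => ?_⟩
  · have h₁ := Submodule.finrank_add_eq_of_isCompl hC
    have h₂ := LinearMap.finrank_range_add_finrank_ker x.mulVecLin
    rw [rank, hp, Submodule.range_projection, rank]
    omega
  · apply toLin'.injective
    refine LinearMap.ext fun v => ?_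
    have hv : x *ᵥ (v - p v) = 0 := Submodule.sub_projection_mem hC v
    rw [mulVec_sub, sub_eq_zero] at hv
    simp [toLin'_mul, hv]
  · have hQ' : ∀ w, Q *ᵥ w - w ∈ LinearMap.ker y.mulVecLin := fun w => by
      simp [mulVec_sub, mulVec_mulVec, hQ]
    apply toLin'.injective
    refine LinearMap.ext fun w => ?_
    have hw := hker _ (hQ' w)
    rw [LinearMap.mem_ker, map_sub, mulVecLin_apply, mulVec_sub, sub_eq_zero] at hw
    simpa [← mulVec_mulVec] using hw

theorem Matrix.exists_eq_submatrix_mul [Fintype ι] [Fintype κ] [DecidableEq κ] [Fintype o]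
    {e : ι → κ} (he : Function.Injective e) (M : Matrix κ o k) (hM : M.rank ≤ Fintype.card ι) :
    ∃ (g : GL κ k) (b : Matrix ι o k), M = (g : Matrix κ κ k).submatrix id e * b := by
  classical
  set J : Matrix κ ι k := (1 : Matrix κ κ k).submatrix id e
  have hJJ : Jᵀ * J = 1 := by
    rw [transpose_submatrix, transpose_one, ← submatrix_mul _ _ _ _ _ Function.bijective_id,
      one_mul, submatrix_one e he]
  have hJ : Fintype.card ι ≤ J.rank := by simpa [hJJ] using rank_mul_le_right Jᵀ J
  obtain ⟨g, hg⟩ := Submodule.exists_le_map_linearEquiv (hM.trans hJ)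
  set A := LinearMap.toMatrix' g.toLinearMap
  set A' := LinearMap.toMatrix' g.symm.toLinearMap
  let G : GL κ k := ⟨A, A', by simp [A, A', ← LinearMap.toMatrix'_comp],
    by simp [A, A', ← LinearMap.toMatrix'_comp]⟩
  refine ⟨G, Jᵀ * A' * M, toLin'.injective <| LinearMap.ext fun v => ?_⟩
  obtain ⟨_, ⟨u, rfl⟩, hu⟩ := hg (LinearMap.mem_range_self M.mulVecLin v)
  have hGJ : (G : Matrix κ κ k).submatrix id e = A * J :=
    (mul_submatrix_one (Equiv.refl κ) e A).symm
  simp only [toLin'_apply, hGJ, ← mulVec_mulVec]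
  rw [← mulVecLin_apply M v, ← hu]
  simp only [mulVecLin_apply, A', A, LinearMap.toMatrix'_mulVec, LinearEquiv.coe_coe,
    LinearEquiv.symm_apply_apply, mulVec_mulVec u Jᵀ J, hJJ, one_mulVec]

end Matrix

section Polarization

open Matrix

variable {k : Type*} [Field k]

theorem MvPolynomial.eval_aeval {σ τ : Type*} (f : τ → k) (g : σ → MvPolynomial τ k)
    (F : MvPolynomial σ k) : eval f (aeval g F) = eval (fun i => eval f (g i)) F :=
  aeval_bind₁ f g F

noncomputable def mulRightSubst {ι l m : Type*} [Fintype l] (b : Matrix l m k) :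
    MvPolynomial (ι × m) k →ₐ[k] MvPolynomial (ι × l) k :=
  aeval fun p => ∑ u : l, X (p.1, u) * C (b u p.2)

theorem eval_mulRightSubst {ι l m : Type*} [Fintype l] (b : Matrix l m k) (z : Matrix ι l k)
    (F : MvPolynomial (ι × m) k) :
    eval (fun p => z p.1 p.2) (mulRightSubst b F) = eval (fun p => (z * b) p.1 p.2) F := by
  rw [mulRightSubst, eval_aeval]
  congr 2 with p
  simp [mul_apply]

theorem eval_jmap {n d : ℕ} (hnd : n ≤ d) (z : Matrix (Fin n) (Fin d) k)
    (f : MvPolynomial (Fin n × Fin n) k) :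
    eval (fun p => z p.1 p.2) (jmap hnd f)
      = eval (fun p => z.submatrix id (Fin.castLE hnd) p.1 p.2) f := by
  rw [jmap, eval_aeval]
  congr 2 with p
  simp

theorem rowAct_mulRightSubst {n d d' : ℕ} (h : GL (Fin n) k) (b : Matrix (Fin d') (Fin d) k)
    (F : MvPolynomial (Fin n × Fin d) k) :
    rowAct h (mulRightSubst b F) = mulRightSubst b (rowAct h F) := by
  rw [← AlgHom.comp_apply, ← AlgHom.comp_apply]
  congr 1
  refine MvPolynomial.algHom_ext fun p => ?_
  simp only [AlgHom.comp_apply, rowAct, mulRightSubst, aeval_X, map_sum, map_mul, aeval_C,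
    algebraMap_eq, Finset.sum_mul, Finset.mul_sum]
  rw [Finset.sum_comm]
  exact Finset.sum_congr rfl fun _ _ => Finset.sum_congr rfl fun _ _ => by ring

theorem mulRightSubst_mem_HinvAlg {n d d' : ℕ} {H : Subgroup (GL (Fin n) k)}
    (b : Matrix (Fin d') (Fin d) k) {F : MvPolynomial (Fin n × Fin d) k} (hF : F ∈ HinvAlg H) :
    mulRightSubst b F ∈ HinvAlg H := fun h hh => by
  rw [rowAct_mulRightSubst, hF h hh]

theorem colAct_eq_mulRightSubst {n d : ℕ} (g : GL (Fin d) k) :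
    colAct (n := n) g = mulRightSubst (g : Matrix (Fin d) (Fin d) k) :=
  rfl

theorem eval_mul_eq_of_rank_le_of_polarized {n d : ℕ} (hnd : n ≤ d)
    {H : Subgroup (GL (Fin n) k)} {x y : Matrix (Fin n) (Fin d) k}
    (hpol : ∀ f ∈ polarized hnd H, eval (fun p => x p.1 p.2) f = eval (fun p => y p.1 p.2) f)
    {F : MvPolynomial (Fin n × Fin d) k} (hF : F ∈ HinvAlg H) {M : Matrix (Fin d) (Fin d) k}
    (hM : M.rank ≤ n) :
    eval (fun p => (x * M) p.1 p.2) F = eval (fun p => (y * M) p.1 p.2) F := by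
  obtain ⟨g, b, rfl⟩ := M.exists_eq_submatrix_mul (Fin.castLE_injective hnd) (by simpa using hM)
  have key := hpol _ <| Algebra.subset_adjoin
    ⟨g, mulRightSubst b F, mulRightSubst_mem_HinvAlg b hF, rfl⟩
  have hsub (z : Matrix (Fin n) (Fin d) k) :
      z * ((g : Matrix (Fin d) (Fin d) k).submatrix id (Fin.castLE hnd) * b)
        = (z * (g : Matrix (Fin d) (Fin d) k)).submatrix id (Fin.castLE hnd) * b := by
    rw [submatrix_mul _ _ _ _ _ Function.bijective_id, submatrix_id_id, Matrix.mul_assoc]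
  simpa only [colAct_eq_mulRightSubst, eval_mulRightSubst, eval_jmap, hsub] using key

end Polarization

theorem stmt6_general {k : Type*} [Field k] {n d : ℕ} (hnd : n ≤ d)
    (H : Subgroup (GL (Fin n) k)) (x y : Matrix (Fin n) (Fin d) k)
    (F : MvPolynomial (Fin n × Fin d) k) (hF : F ∈ HinvAlg H)
    (hxy : eval (fun p => x p.1 p.2) F ≠ eval (fun p => y p.1 p.2) F) :
    ∃ f ∈ polarized hnd H,
      eval (fun p => x p.1 p.2) f ≠ eval (fun p => y p.1 p.2) f := by
  by_contra! hpol
  have hF' {M : Matrix (Fin d) (Fin d) k} (hM : M.rank ≤ n) :=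
    eval_mul_eq_of_rank_le_of_polarized hnd hpol hF hM
  obtain ⟨P, hP, hxP, hyP⟩ := x.exists_mul_eq_self_preserving_ker y
  obtain ⟨Q, hQ, hyQ, -⟩ := y.exists_mul_eq_self_preserving_ker y
  have hPn : P.rank ≤ n := hP ▸ by simpa using x.rank_le_card_height
  have hQn : Q.rank ≤ n := hQ ▸ by simpa using y.rank_le_card_height
  apply hxy
  calc eval (fun p => x p.1 p.2) F = eval (fun p => (x * P) p.1 p.2) F := by rw [hxP]
    _ = eval (fun p => (y * P) p.1 p.2) F := hF' hPn
    _ = eval (fun p => (y * (P * Q)) p.1 p.2) F := by rw [← Matrix.mul_assoc, hyP Q hyQ]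
    _ = eval (fun p => (x * (P * Q)) p.1 p.2) F := (hF' ((P.rank_mul_le_left Q).trans hPn)).symm
    _ = eval (fun p => (x * Q) p.1 p.2) F := by rw [← Matrix.mul_assoc, hxP]
    _ = eval (fun p => (y * Q) p.1 p.2) F := hF' hQn
    _ = eval (fun p => y p.1 p.2) F := by rw [hyQ]

/-- Theorem 7 (case `Z = {0}`): if some `H`-invariant of `d` vectors separates the matrices
`x` and `y`, then some polarized invariant already separates them. -/
theorem stmt6 {k : Type*} [Field k] [IsAlgClosed k] {n d : ℕ} (hn : 0 < n) (hnd : n ≤ d)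
    (H : Subgroup (GL (Fin n) k)) (x y : Matrix (Fin n) (Fin d) k)
    (F : MvPolynomial (Fin n × Fin d) k) (hF : F ∈ HinvAlg H)
    (hxy : eval (fun p => x p.1 p.2) F ≠ eval (fun p => y p.1 p.2) F) :
    ∃ f ∈ polarized hnd H,
      eval (fun p => x p.1 p.2) f ≠ eval (fun p => y p.1 p.2) f :=
  stmt6_general hnd H x y F hF hxy
end

section
/- Suppose char k = p, H is a finite subgroup of GL_n(k), and p > |H| (p prime). Then GL_d * j(^H k[M_{n,n}]) = ^H k[M_{n,d}]. (Theorem 23(a).) -/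
/-!
The inclusion `⊆` holds because the column action of `GL_d` commutes with the row action of `H`.
For `⊇`, averaging over `H` (its order `N` is invertible in `k`) reduces the claim to Reynolds
images of monomials, and Noether's argument bounds their degree: the polarization identity
`N! x₁⋯x_N = ∑_t (-1)^|t| (∑_{j ∉ t} x_j)^N`, together with the fact that a linear form `ℓ` is a
root of the monic polynomial `∏_{h ∈ H} (T - h·ℓ)` with invariant coefficients, expresses the
Reynolds image of a monomial of degree `> N` through Reynolds images of lower degree.

A monomial `m` of degree `≤ N` has all row degrees `rᵢ < p`. Substituting a `d × n` matrix `A`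
into the invariant `reynolds H (∏ᵢ X(i,i)^{rᵢ})` gives a polynomial in the entries of `A` whose
coefficient at the monomial matching `m` is `reynolds H m` times a nonzero multinomial coefficient.
When the top `n × n` block of `A` is invertible, `A = g * j` for some `g ∈ GL_d`, so the
substituted invariant lies in `GL_d * j(^H k[M_{n,n}])`; as such `A` are Zariski dense, so does
every coefficient.
-/

open MvPolynomial

open Finset Matrix

section Substitution

variable {k : Type*} [Field k] {n : ℕ}

noncomputable def colSubst {d e : ℕ} (M : Matrix (Fin d) (Fin e) k) :
    MvPolynomial (Fin n × Fin e) k →ₐ[k] MvPolynomial (Fin n × Fin d) k :=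
  aeval fun p => ∑ s : Fin d, X (p.1, s) * C (M s p.2)

theorem colSubst_X {d e : ℕ} (M : Matrix (Fin d) (Fin e) k) (p : Fin n × Fin e) :
    colSubst M (X p) = ∑ s : Fin d, X (p.1, s) * C (M s p.2) :=
  aeval_X _ _

theorem colSubst_colSubst {d e f : ℕ} (M : Matrix (Fin d) (Fin e) k)
    (M' : Matrix (Fin e) (Fin f) k) (F : MvPolynomial (Fin n × Fin f) k) :
    colSubst M (colSubst M' F) = colSubst (M * M') F := by
  rw [← AlgHom.comp_apply]
  congr 1
  refine algHom_ext fun p => ?_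
  simp only [AlgHom.comp_apply, colSubst_X, map_sum, map_mul, algHom_C, algebraMap_eq,
    Matrix.mul_apply, sum_mul, mul_sum, mul_assoc]
  exact sum_comm

theorem colAct_eq_colSubst {d : ℕ} (g : GL (Fin d) k) :
    (colAct g : MvPolynomial (Fin n × Fin d) k →ₐ[k] _) = colSubst (g : Matrix (Fin d) (Fin d) k) :=
  rfl

theorem rowAct_X {d : ℕ} (h : GL (Fin n) k) (p : Fin n × Fin d) :
    rowAct h (X p) = ∑ s : Fin n, C ((h⁻¹ : GL (Fin n) k) p.1 s) * X (s, p.2) :=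
  aeval_X _ _

theorem rowAct_mul {d : ℕ} (g h : GL (Fin n) k) (F : MvPolynomial (Fin n × Fin d) k) :
    rowAct (g * h) F = rowAct g (rowAct h F) := by
  rw [← AlgHom.comp_apply]
  congr 1
  refine algHom_ext fun p => ?_
  simp only [AlgHom.comp_apply, rowAct_X, map_sum, map_mul, algHom_C, algebraMap_eq,
    _root_.mul_inv_rev, Units.val_mul, Matrix.mul_apply, sum_mul, mul_sum, ← mul_assoc]
  exact sum_comm

theorem rowAct_one {d : ℕ} (F : MvPolynomial (Fin n × Fin d) k) : rowAct 1 F = F := by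
  rw [← AlgHom.id_apply (R := k) F]
  congr 1
  refine algHom_ext fun p => ?_
  simp [rowAct_X, Matrix.one_apply]

theorem rowAct_colSubst {d e : ℕ} (h : GL (Fin n) k) (M : Matrix (Fin d) (Fin e) k)
    (F : MvPolynomial (Fin n × Fin e) k) :
    rowAct h (colSubst M F) = colSubst M (rowAct h F) := by
  rw [← AlgHom.comp_apply, ← AlgHom.comp_apply]
  congr 1
  refine algHom_ext fun p => ?_
  simp only [AlgHom.comp_apply, rowAct_X, colSubst_X, map_sum, map_mul, algHom_C, algebraMap_eq,
    sum_mul, mul_sum, mul_assoc]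
  exact sum_comm

end Substitution

section Polarized

variable {k : Type*} [Field k] {n d : ℕ}

variable (k) in
def inclMatrix (hnd : n ≤ d) : Matrix (Fin d) (Fin n) k :=
  (1 : Matrix (Fin d) (Fin d) k).submatrix id (Fin.castLE hnd)

theorem jmap_eq_colSubst (hnd : n ≤ d) :
    (jmap hnd : MvPolynomial (Fin n × Fin n) k →ₐ[k] MvPolynomial (Fin n × Fin d) k) =
      colSubst (inclMatrix k hnd) := by
  refine algHom_ext fun p => ?_
  simp [jmap, colSubst_X, inclMatrix, Matrix.one_apply]

theorem transpose_inclMatrix_mul (hnd : n ≤ d) {m : Type*} (A : Matrix (Fin d) m k) :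
    (inclMatrix k hnd)ᵀ * A = A.submatrix (Fin.castLE hnd) id := by
  rw [inclMatrix, transpose_submatrix, transpose_one]
  exact one_submatrix_mul _ (Equiv.refl _) A

theorem transpose_inclMatrix_mul_self (hnd : n ≤ d) :
    (inclMatrix k hnd)ᵀ * inclMatrix k hnd = 1 := by
  rw [transpose_inclMatrix_mul]
  exact submatrix_one _ (Fin.castLE_injective hnd)

theorem exists_GL_mul_inclMatrix (hnd : n ≤ d) (A : Matrix (Fin d) (Fin n) k)
    (hA : (A.submatrix (Fin.castLE hnd) id).det ≠ 0) :
    ∃ g : GL (Fin d) k, (g : Matrix (Fin d) (Fin d) k) * inclMatrix k hnd = A := by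
  -- with `J := inclMatrix k hnd`, take `g := 1 + (A - J) Jᵀ`; Weinstein–Aronszajn gives
  -- `det g = det (1 + Jᵀ (A - J)) = det (Jᵀ A)`
  have hdet : (1 + (A - inclMatrix k hnd) * (inclMatrix k hnd)ᵀ).det ≠ 0 := by
    rwa [det_one_add_mul_comm, Matrix.mul_sub, transpose_inclMatrix_mul_self, add_sub_cancel,
      transpose_inclMatrix_mul]
  refine ⟨Matrix.GeneralLinearGroup.mkOfDetNeZero _ hdet, ?_⟩
  simp only [Matrix.GeneralLinearGroup.val_mkOfDetNeZero, Matrix.add_mul, Matrix.one_mul,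
    Matrix.mul_assoc, transpose_inclMatrix_mul_self, Matrix.mul_one, add_sub_cancel]

theorem colSubst_mem_polarized (hnd : n ≤ d) (H : Subgroup (GL (Fin n) k))
    {A : Matrix (Fin d) (Fin n) k} (hA : (A.submatrix (Fin.castLE hnd) id).det ≠ 0)
    {f : MvPolynomial (Fin n × Fin n) k} (hf : f ∈ HinvAlg (d := n) H) :
    colSubst A f ∈ polarized hnd H := by
  obtain ⟨g, rfl⟩ := exists_GL_mul_inclMatrix hnd A hA
  rw [← colSubst_colSubst, ← jmap_eq_colSubst]
  exact Algebra.subset_adjoin ⟨g, f, hf, rfl⟩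

variable (k) in
noncomputable def topMinor (hnd : n ≤ d) : MvPolynomial (Fin n × Fin d) k :=
  ((of fun q i => X (i, q) : Matrix (Fin d) (Fin n) (MvPolynomial (Fin n × Fin d) k)).submatrix
    (Fin.castLE hnd) id).det

theorem eval_topMinor (hnd : n ≤ d) (a : Fin n × Fin d → k) :
    eval a (topMinor k hnd) = ((of fun q i => a (i, q)).submatrix (Fin.castLE hnd) id).det := by
  rw [topMinor, RingHom.map_det]
  congr 1
  ext j i
  simp

theorem topMinor_ne_zero (hnd : n ≤ d) : topMinor k hnd ≠ 0 := fun h => by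
  have h₁ := eval_topMinor hnd fun x => inclMatrix k hnd x.2 x.1
  change eval _ _ = ((inclMatrix k hnd).submatrix (Fin.castLE hnd) id).det at h₁
  rw [h, map_zero, ← transpose_inclMatrix_mul, transpose_inclMatrix_mul_self, det_one] at h₁
  exact zero_ne_one h₁

end Polarized

section Reynolds

variable {k : Type*} [Field k] {n d : ℕ} (H : Subgroup (GL (Fin n) k))

theorem mem_HinvAlg {F : MvPolynomial (Fin n × Fin d) k} :
    F ∈ HinvAlg H ↔ ∀ h ∈ H, rowAct h F = F :=
  Iff.rfl

variable [Fintype H]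

noncomputable def reynolds : MvPolynomial (Fin n × Fin d) k →ₗ[k] MvPolynomial (Fin n × Fin d) k :=
  (Fintype.card H : k)⁻¹ • ∑ h : H, (rowAct (d := d) (h : GL (Fin n) k)).toLinearMap

theorem reynolds_apply (F : MvPolynomial (Fin n × Fin d) k) :
    reynolds H F = (Fintype.card H : k)⁻¹ • ∑ h : H, rowAct (h : GL (Fin n) k) F := by
  simp [reynolds]

theorem reynolds_mem_HinvAlg (F : MvPolynomial (Fin n × Fin d) k) : reynolds H F ∈ HinvAlg H := by
  refine (mem_HinvAlg H).2 fun h hh => ?_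
  rw [reynolds_apply, map_smul, map_sum]
  refine congrArg _ ?_
  exact Fintype.sum_equiv (Equiv.mulLeft ⟨h, hh⟩) _ _ fun x => by
    rw [Equiv.coe_mulLeft, Subgroup.coe_mul, rowAct_mul]

theorem reynolds_eq_self (hH : (Fintype.card H : k) ≠ 0) {F : MvPolynomial (Fin n × Fin d) k}
    (hF : F ∈ HinvAlg H) : reynolds H F = F := by
  rw [reynolds_apply, sum_congr rfl fun (h : H) _ => (mem_HinvAlg H).1 hF h h.prop, sum_const,
    card_univ, ← Nat.cast_smul_eq_nsmul k, smul_smul, inv_mul_cancel₀ hH, one_smul]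

theorem reynolds_mul_of_mem {u : MvPolynomial (Fin n × Fin d) k} (hu : u ∈ HinvAlg H)
    (F : MvPolynomial (Fin n × Fin d) k) : reynolds H (u * F) = u * reynolds H F := by
  simp only [reynolds_apply, map_mul, (mem_HinvAlg H).1 hu _ (SetLike.coe_mem _), ← mul_sum,
    mul_smul_comm]

theorem colSubst_reynolds {e : ℕ} (M : Matrix (Fin d) (Fin e) k)
    (F : MvPolynomial (Fin n × Fin e) k) :
    colSubst M (reynolds H F) = reynolds H (colSubst M F) := by
  simp only [reynolds_apply, map_smul, map_sum, rowAct_colSubst]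

theorem reynolds_mem_of_forall_monomial (S : Subalgebra k (MvPolynomial (Fin n × Fin d) k))
    {F : MvPolynomial (Fin n × Fin d) k}
    (hF : ∀ ν ∈ F.support, reynolds H (monomial ν 1) ∈ S) : reynolds H F ∈ S := by
  rw [F.as_sum, map_sum]
  refine Subalgebra.sum_mem _ fun ν hν => ?_
  rw [← mul_one (coeff ν F), ← smul_eq_mul, ← smul_monomial, map_smul]
  exact Subalgebra.smul_mem _ (hF ν hν) _

end Reynolds

theorem forall_mem_of_forall_eval_ne_zero {k σ ι M : Type*} [Field k] [Infinite k] [Fintype σ]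
    [AddCommGroup M] [Module k M] (U : Submodule k M) (s : Finset ι) (β : ι → σ → ℕ)
    (hβ : Set.InjOn β s) (w : ι → M) {ψ : MvPolynomial σ k} (hψ : ψ ≠ 0)
    (hU : ∀ a : σ → k, eval a ψ ≠ 0 → ∑ t ∈ s, (∏ x, a x ^ β t x) • w t ∈ U) :
    ∀ t ∈ s, w t ∈ U := by
  classical
  intro t₀ ht₀
  rw [← Submodule.Quotient.mk_eq_zero, ← Module.forall_dual_apply_eq_zero_iff k]
  intro φ
  let e : ι → σ →₀ ℕ := fun t => Finsupp.equivFunOnFinite.symm (β t)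
  let P : MvPolynomial σ k := ∑ t ∈ s, monomial (e t) (φ (U.mkQ (w t)))
  -- `P` vanishes wherever `ψ` does not
  have hP : P * ψ = 0 := by
    refine MvPolynomial.funext fun a => ?_
    rw [map_mul, map_zero]
    by_cases ha : eval a ψ = 0
    · rw [ha, mul_zero]
    · have hPa : eval a P = φ (U.mkQ (∑ t ∈ s, (∏ x, a x ^ β t x) • w t)) := by
        simp [P, e, eval_monomial, Finsupp.prod_fintype, mul_comm]
      rw [hPa, Submodule.mkQ_apply, (Submodule.Quotient.mk_eq_zero U).2 (hU a ha), map_zero,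
        zero_mul]
  have hcoeff := congrArg (coeff (e t₀)) ((mul_eq_zero.1 hP).resolve_right hψ)
  rw [coeff_sum, sum_eq_single t₀ ?_ (fun h => (h ht₀).elim), coeff_monomial, if_pos rfl,
    coeff_zero] at hcoeff
  · exact hcoeff
  · intro t ht hne
    rw [coeff_monomial, if_neg fun h => hne (hβ ht ht₀ (Finsupp.equivFunOnFinite.symm.injective h))]

section SmallDegree

variable {k : Type*} [Field k] {n d : ℕ}

theorem prod_univ_X_pow_eq_monomial {σ : Type*} [Fintype σ] (ν : σ →₀ ℕ) :
    ∏ x, (X x : MvPolynomial σ k) ^ ν x = monomial ν 1 := by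
  rw [monomial_eq, C_1, one_mul, Finsupp.prod_fintype _ _ fun _ => pow_zero _]

theorem colSubst_prod_X_diag_pow (A : Matrix (Fin d) (Fin n) k) (r : Fin n → ℕ) :
    colSubst A (∏ i, X (i, i) ^ r i : MvPolynomial (Fin n × Fin n) k) =
      ∑ κ ∈ Fintype.piFinset fun i => piAntidiag univ (r i),
        (∏ x : Fin n × Fin d, A x.2 x.1 ^ κ x.1 x.2) •
          ((∏ i, (Nat.multinomial univ (κ i) : k)) • ∏ x : Fin n × Fin d, X x ^ κ x.1 x.2) := by
  simp only [map_prod, map_pow, colSubst_X, sum_pow_eq_sum_piAntidiag]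
  rw [prod_univ_sum]
  refine sum_congr rfl fun κ _ => ?_
  simp only [Fintype.prod_prod_type, mul_pow, prod_mul_distrib, smul_eq_C_mul, map_prod, map_pow,
    map_natCast]
  ring

theorem reynolds_monomial_mem_polarized_of_factorial_ne_zero [Infinite k] (hnd : n ≤ d)
    (H : Subgroup (GL (Fin n) k)) [Fintype H] (ν : Fin n × Fin d →₀ ℕ)
    (hν : ∀ i, ((∑ q, ν (i, q)).factorial : k) ≠ 0) :
    reynolds H (monomial ν 1) ∈ polarized hnd H := by
  let r : Fin n → ℕ := fun i => ∑ q, ν (i, q)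
  let T : Finset (Fin n → Fin d → ℕ) := Fintype.piFinset fun i => piAntidiag univ (r i)
  have hcoeff := forall_mem_of_forall_eval_ne_zero (Subalgebra.toSubmodule (polarized hnd H)) T
    (fun κ x => κ x.1 x.2) (fun κ _ κ' _ h => funext₂ fun i q => congrFun h (i, q))
    (fun κ => (∏ i, (Nat.multinomial univ (κ i) : k)) •
      reynolds H (∏ x : Fin n × Fin d, X x ^ κ x.1 x.2)) (topMinor_ne_zero hnd) fun a ha => by
    rw [eval_topMinor] at ha
    have := colSubst_mem_polarized hnd H ha (reynolds_mem_HinvAlg H (∏ i, X (i, i) ^ r i))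
    rw [colSubst_reynolds, colSubst_prod_X_diag_pow, map_sum] at this
    simpa only [map_smul, of_apply, Prod.mk.eta, Subalgebra.mem_toSubmodule] using this
  have hκ : (fun i q => ν (i, q)) ∈ T := by
    simp [T, r, Fintype.mem_piFinset, mem_piAntidiag]
  have hc : (∏ i, (Nat.multinomial univ fun q => ν (i, q) : k)) ≠ 0 :=
    prod_ne_zero_iff.2 fun i _ h => hν i (by rw [← Nat.multinomial_spec, Nat.cast_mul, h, mul_zero])
  have := (Submodule.smul_mem_iff _ hc).1 (hcoeff _ hκ)
  rwa [prod_univ_X_pow_eq_monomial] at this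

end SmallDegree

open Nat in
theorem sum_neg_one_pow_mul_sum_compl_pow {A : Type*} [CommRing A] (N : ℕ) (f : Fin N → A) :
    ∑ t : Finset (Fin N), (-1) ^ #t * (∑ j ∈ tᶜ, f j) ^ N = N ! * ∏ j, f j := by
  classical
  let avoiding : Fin N → Finset (Fin N → Fin N) := fun j => univ.filter fun g => ∀ i, g i ≠ j
  have h_inf (t : Finset (Fin N)) : t.inf avoiding = Fintype.piFinset fun _ => tᶜ := by
    ext g
    simp only [avoiding, mem_inf, mem_filter, mem_univ, true_and, Fintype.mem_piFinset, mem_compl]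
    grind
  have h_surj : (univ.inf fun j => (avoiding j)ᶜ) = univ.filter fun g => Function.Bijective g := by
    ext g
    simp only [avoiding, mem_inf, mem_compl, mem_filter, mem_univ, true_and, not_forall, not_not,
      forall_const, ← Finite.surjective_iff_bijective]
    rfl
  calc ∑ t : Finset (Fin N), (-1) ^ #t * (∑ j ∈ tᶜ, f j) ^ N
      = ∑ t ∈ univ.powerset, (-1) ^ #t • ∑ g ∈ t.inf avoiding, ∏ i, f (g i) := by
        rw [powerset_univ]
        refine sum_congr rfl fun t _ => ?_
        rw [h_inf, ← prod_univ_sum, prod_const, Finset.card_univ, Fintype.card_fin, zsmul_eq_mul]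
        push_cast
        rfl
    _ = ∑ g ∈ univ.inf fun j => (avoiding j)ᶜ, ∏ i, f (g i) :=
        (inclusion_exclusion_sum_inf_compl _ _ _).symm
    _ = ∑ σ : Equiv.Perm (Fin N), ∏ i, f (σ i) := by
        rw [h_surj, sum_subtype _ fun _ => mem_filter.trans (and_iff_right (mem_univ _))]
        exact Fintype.sum_equiv (Equiv.bijectiveEquiv) _ _ fun _ => rfl
    _ = N ! * ∏ j, f j := by
        simp only [Equiv.prod_comp, sum_const, Finset.card_univ, Fintype.card_perm,
          Fintype.card_fin, nsmul_eq_mul]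

theorem exists_monomial_eq_prod_X_mul {σ R : Type*} [CommSemiring R] (ν : σ →₀ ℕ) {N : ℕ}
    (hN : N ≤ ν.degree) :
    ∃ (v : Fin N → σ) (ν' : σ →₀ ℕ), ν'.degree + N = ν.degree ∧
      monomial ν (1 : R) = (∏ j, X (v j)) * monomial ν' 1 := by
  induction N with
  | zero => exact ⟨Fin.elim0, ν, rfl, by simp⟩
  | succ N ih =>
    obtain ⟨v, ν', hdeg, hν⟩ := ih (by omega)
    obtain ⟨i, hi⟩ : ∃ i, ν' i ≠ 0 := by
      by_contra! h
      rw [show ν' = 0 from Finsupp.ext h, map_zero] at hdeg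
      omega
    obtain ⟨ν'', rfl⟩ : ∃ ν'', ν' = ν'' + Finsupp.single i 1 :=
      ⟨_, (tsub_add_cancel_of_le (Finsupp.single_le_iff.2 (Nat.one_le_iff_ne_zero.2 hi))).symm⟩
    refine ⟨Fin.snoc v i, ν'', ?_, ?_⟩
    · rw [← hdeg, map_add, Finsupp.degree_single]
      omega
    · rw [hν, monomial_add_single, pow_one, Fin.prod_univ_castSucc]
      simp only [Fin.snoc_castSucc, Fin.snoc_last]
      ring

section OrbitPolynomial

variable {k : Type*} [Field k] {n d : ℕ} (H : Subgroup (GL (Fin n) k)) [Fintype H]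

theorem MvPolynomial.IsHomogeneous.rowAct {F : MvPolynomial (Fin n × Fin d) k} {m : ℕ}
    (hF : F.IsHomogeneous m) (h : GL (Fin n) k) : (rowAct h F).IsHomogeneous m := by
  have hX (p : Fin n × Fin d) : (∑ s : Fin n, C ((h⁻¹ : GL (Fin n) k) p.1 s) * X (s, p.2) :
      MvPolynomial (Fin n × Fin d) k).IsHomogeneous 1 :=
    IsHomogeneous.sum _ _ _ fun s _ => isHomogeneous_C_mul_X _ _
  have := hF.aeval _ hX
  rwa [one_mul] at this

noncomputable def orbitPoly (ℓ : MvPolynomial (Fin n × Fin d) k) :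
    Polynomial (MvPolynomial (Fin n × Fin d) k) :=
  ∏ h : H, (Polynomial.X - Polynomial.C (rowAct (h : GL (Fin n) k) ℓ))

variable (ℓ : MvPolynomial (Fin n × Fin d) k)

theorem orbitPoly_monic : (orbitPoly H ℓ).Monic :=
  Polynomial.monic_prod_of_monic _ _ fun _ _ => Polynomial.monic_X_sub_C _

theorem natDegree_orbitPoly : (orbitPoly H ℓ).natDegree = Fintype.card H := by
  rw [orbitPoly, Polynomial.natDegree_prod_of_monic _ _ fun _ _ => Polynomial.monic_X_sub_C _]
  simp

theorem pow_card_eq_neg_sum_coeff_orbitPoly :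
    ℓ ^ Fintype.card H = -∑ j ∈ range (Fintype.card H), (orbitPoly H ℓ).coeff j * ℓ ^ j := by
  have hroot : (orbitPoly H ℓ).eval ℓ = 0 := by
    rw [orbitPoly, Polynomial.eval_prod]
    refine prod_eq_zero (mem_univ 1) ?_
    simp [rowAct_one]
  rw [Polynomial.eval_eq_sum_range, sum_range_succ, (orbitPoly_monic H ℓ).coeff_natDegree, one_mul,
    natDegree_orbitPoly] at hroot
  exact eq_neg_of_add_eq_zero_right hroot

theorem coeff_orbitPoly_mem_HinvAlg (j : ℕ) : (orbitPoly H ℓ).coeff j ∈ HinvAlg H := by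
  refine (mem_HinvAlg H).2 fun h hh => ?_
  have hmap : (orbitPoly H ℓ).map (rowAct (d := d) h).toRingHom =
      orbitPoly H ℓ := by
    simp only [orbitPoly, Polynomial.map_prod, Polynomial.map_sub, Polynomial.map_X,
      Polynomial.map_C, AlgHom.toRingHom_eq_coe, RingHom.coe_coe]
    refine Fintype.prod_equiv (Equiv.mulLeft ⟨h, hh⟩) _ _ fun x => ?_
    rw [Equiv.coe_mulLeft, Subgroup.coe_mul, rowAct_mul]
  conv_rhs => rw [← hmap]
  rw [Polynomial.coeff_map, AlgHom.toRingHom_eq_coe, RingHom.coe_coe]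

theorem isHomogeneous_coeff_orbitPoly (hℓ : ℓ.IsHomogeneous 1) (j : ℕ) :
    ((orbitPoly H ℓ).coeff j).IsHomogeneous (Fintype.card H - j) := by
  rcases le_or_gt j (Fintype.card H) with hj | hj
  · have : orbitPoly H ℓ =
        ∏ h : H, (Polynomial.X + Polynomial.C (-rowAct (h : GL (Fin n) k) ℓ)) := by
      simp [orbitPoly, sub_eq_add_neg]
    rw [this, Finset.prod_X_add_C_coeff _ _ (by simpa using hj), card_univ]
    refine IsHomogeneous.sum _ _ _ fun t ht => ?_
    have := IsHomogeneous.prod t _ (fun _ => 1) fun h _ => (hℓ.rowAct (h : GL (Fin n) k)).neg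
    simpa [(mem_powersetCard.1 ht).2] using this
  · rw [Polynomial.coeff_eq_zero_of_natDegree_lt (by rwa [natDegree_orbitPoly])]
    exact isHomogeneous_zero _ _ _

end OrbitPolynomial

open Nat in
theorem CharP.cast_factorial_ne_zero {R : Type*} [Semiring R] {p : ℕ} [CharP R p] (hp : p.Prime)
    {m : ℕ} (hm : m < p) : (m ! : R) ≠ 0 := by
  rwa [Ne, CharP.cast_eq_zero_iff R p, hp.dvd_factorial, not_le]

open Nat in
theorem Nat.cast_ne_zero_of_cast_factorial_ne_zero {R : Type*} [Semiring R] {m : ℕ} (hm : 0 < m)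
    (h : (m ! : R) ≠ 0) : (m : R) ≠ 0 := fun h₀ =>
  h (by rw [← Nat.mul_factorial_pred hm.ne', Nat.cast_mul, h₀, zero_mul])

section NoetherBound

variable {k : Type*} [Field k] {n d : ℕ} (H : Subgroup (GL (Fin n) k)) [Fintype H]
  (S : Subalgebra k (MvPolynomial (Fin n × Fin d) k))

theorem reynolds_pow_card_mul_mem (hH : (Fintype.card H : k) ≠ 0) {D : ℕ} (hD : 0 < D)
    (ih : ∀ m < D + Fintype.card H, ∀ F : MvPolynomial (Fin n × Fin d) k,
      F.IsHomogeneous m → reynolds H F ∈ S)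
    {ℓ G : MvPolynomial (Fin n × Fin d) k} (hℓ : ℓ.IsHomogeneous 1) (hG : G.IsHomogeneous D) :
    reynolds H (ℓ ^ Fintype.card H * G) ∈ S := by
  rw [pow_card_eq_neg_sum_coeff_orbitPoly, neg_mul, map_neg, sum_mul, map_sum]
  refine neg_mem (sum_mem fun j hj => ?_)
  have hjN := mem_range.1 hj
  have he := coeff_orbitPoly_mem_HinvAlg H ℓ j
  rw [mul_assoc, reynolds_mul_of_mem H he]
  refine mul_mem ?_ ?_
  · rw [← reynolds_eq_self H hH he]
    exact ih _ (by omega) _ (isHomogeneous_coeff_orbitPoly H ℓ hℓ j)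
  · refine ih (j + D) (by omega) _ ?_
    simpa using (hℓ.pow j).mul hG

open Nat in
theorem reynolds_monomial_mem_of_degree_le_card (hH : ((Fintype.card H)! : k) ≠ 0)
    (hS : ∀ ν : Fin n × Fin d →₀ ℕ, ν.degree ≤ Fintype.card H → reynolds H (monomial ν 1) ∈ S)
    (ν : Fin n × Fin d →₀ ℕ) : reynolds H (monomial ν 1) ∈ S := by
  set N := Fintype.card H
  have hN : (N : k) ≠ 0 := Nat.cast_ne_zero_of_cast_factorial_ne_zero Fintype.card_pos hH
  induction hr : ν.degree using Nat.strong_induction_on generalizing ν with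
  | _ r ih =>
  rcases le_or_gt r N with hrN | hNr
  · exact hS ν (hr ▸ hrN)
  have ih' (m : ℕ) (hm : m < r) (F : MvPolynomial (Fin n × Fin d) k) (hF : F.IsHomogeneous m) :
      reynolds H F ∈ S :=
    reynolds_mem_of_forall_monomial H S fun μ hμ => ih m hm μ (hF.degree_eq_sum_deg_support hμ).symm
  obtain ⟨v, ν', hdeg, hν⟩ := exists_monomial_eq_prod_X_mul (R := k) ν (N := N) (by omega)
  let ℓ (t : Finset (Fin N)) : MvPolynomial (Fin n × Fin d) k := ∑ j ∈ tᶜ, X (v j)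
  have hprod : ∏ j, X (v j) = (N ! : k)⁻¹ • ∑ t, (-1) ^ #t * ℓ t ^ N := by
    rw [sum_neg_one_pow_mul_sum_compl_pow, ← nsmul_eq_mul, ← Nat.cast_smul_eq_nsmul k, smul_smul,
      inv_mul_cancel₀ hH, one_smul]
  rw [hν, hprod, smul_mul_assoc, sum_mul, map_smul, map_sum]
  refine Subalgebra.smul_mem _ (Subalgebra.sum_mem _ fun t _ => ?_) _
  have hsign : ((-1) ^ #t : MvPolynomial (Fin n × Fin d) k) ∈ HinvAlg H :=
    pow_mem (neg_mem (one_mem _)) _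
  rw [mul_assoc, reynolds_mul_of_mem H hsign]
  refine mul_mem (pow_mem (neg_mem (one_mem _)) _)
    (reynolds_pow_card_mul_mem H S hN (by omega) (by rw [hdeg, hr]; exact ih') ?_
      (isHomogeneous_monomial _ rfl))
  exact IsHomogeneous.sum _ _ _ fun j _ => isHomogeneous_X _ _

end NoetherBound

theorem Finsupp.sum_row_le_degree {m e : ℕ} (ν : Fin m × Fin e →₀ ℕ) (i : Fin m) :
    ∑ q, ν (i, q) ≤ ν.degree := by
  rw [Finsupp.degree_eq_sum, Fintype.sum_prod_type]
  exact Finset.single_le_sum (f := fun i => ∑ q, ν (i, q)) (fun _ _ => Nat.zero_le _)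
    (Finset.mem_univ i)

theorem stmt11_general {k : Type*} [Field k] [IsAlgClosed k] {n d p : ℕ} (hnd : n ≤ d)
    [CharP k p] (hp : p.Prime) (H : Subgroup (GL (Fin n) k)) [Finite H]
    (hcard : Nat.card H < p) :
    polarized hnd H = HinvAlg H := by
  have := Fintype.ofFinite H
  rw [Nat.card_eq_fintype_card] at hcard
  have hfact (m : ℕ) (hm : m ≤ Fintype.card H) : (m.factorial : k) ≠ 0 :=
    CharP.cast_factorial_ne_zero hp (by omega)
  refine le_antisymm (Algebra.adjoin_le ?_) fun F hF => ?_
  · rintro _ ⟨g, f, hf, rfl⟩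
    refine (mem_HinvAlg H).2 fun h hh => ?_
    rw [colAct_eq_colSubst, jmap_eq_colSubst, colSubst_colSubst, rowAct_colSubst,
      (mem_HinvAlg H).1 hf h hh]
  · rw [← reynolds_eq_self H
      (Nat.cast_ne_zero_of_cast_factorial_ne_zero Fintype.card_pos (hfact _ le_rfl)) hF]
    refine reynolds_mem_of_forall_monomial H _ fun ν _ =>
      reynolds_monomial_mem_of_degree_le_card H _ (hfact _ le_rfl) (fun μ hμ => ?_) ν
    exact reynolds_monomial_mem_polarized_of_factorial_ne_zero hnd H μ fun i =>
      hfact _ ((Finsupp.sum_row_le_degree μ i).trans hμ)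

/-- Theorem 23(a): if `H ≤ GL_n` is finite and `char k = p > |H|`, then
`GL_d * j(^H k[M_{n,n}]) = ^H k[M_{n,d}]`. -/
theorem stmt11 {k : Type*} [Field k] [IsAlgClosed k] {n d p : ℕ} (hn : 0 < n) (hnd : n ≤ d)
    [CharP k p] (hp : p.Prime) (H : Subgroup (GL (Fin n) k)) [Finite H]
    (hcard : Nat.card H < p) :
    polarized hnd H = HinvAlg H :=
  stmt11_general hnd hp H hcard
end

section
/- Suppose char k = 2 and let a ∈ k be a primitive cube root of unity. Let H be the subgroup of GL_3(k) generated by the scalar matrix a·I₃ (a cyclic group of order 3), and let d ≥ 3. Then ^H k[M_{3,d}] is generated as a k-algebra by the monomials of total degree 3 in the variables X(i,q), and GL_d * j(^H k[M_{3,3}]) = ^H k[M_{3,d}]. (Example in Theorem 23(c).) -/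
open MvPolynomial

/-!
The scalar matrix `a • 1` multiplies a monomial of degree `t` by `a⁻ᵗ`, so the invariants are the
polynomials all of whose monomials have degree divisible by `3`; these are generated by the cubic
monomials. Row and column substitutions commute, so polarizations of invariants are invariant.
Conversely, polarizing the invariant `X(i₁,0) X(i₂,1) X(i₃,2)` by `g` gives the product of the
linear forms `x ↦ (x g)(i₁,0)`, `x ↦ (x g)(i₂,1)`, `x ↦ (x g)(i₃,2)`. Taking for `g` a permuted
unitriangular matrix, the first column is `e_q` while the second and third vary independently over
sets spanning `⟨e_q, e_r⟩` and `⟨e_q, e_r, e_w⟩`; by bilinearity every cubic monomial is then a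
linear combination of polarizations, with no division by `3!` as in the usual polarization identity.
-/

section Degree

variable {σ R : Type*} [CommSemiring R]

theorem coeff_aeval_C_mul_X (c : R) (F : MvPolynomial σ R) (m : σ →₀ ℕ) :
    coeff m (aeval (fun p => C c * X p) F) = c ^ m.degree * coeff m F := by
  classical
  induction F using MvPolynomial.induction_on' with
  | monomial m' r =>
    have : aeval (fun p => C c * X p) (monomial m' r) = monomial m' (c ^ m'.degree * r) := by
      rw [aeval_monomial, monomial_eq, Finsupp.degree_apply]
      simp only [mul_pow, Finsupp.prod_mul, algebraMap_eq, C_mul, C_pow]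
      rw [Finsupp.prod, Finsupp.prod, Finset.prod_pow_eq_pow_sum]
      ring
    rw [this, coeff_monomial, coeff_monomial]
    split_ifs with h
    · rw [h]
    · rw [mul_zero]
  | add F G hF hG => rw [map_add, coeff_add, coeff_add, hF, hG, mul_add]

theorem exists_le_degree_eq {m : σ →₀ ℕ} {n : ℕ} (h : n ≤ m.degree) :
    ∃ m' ≤ m, m'.degree = n := by
  induction n with
  | zero => exact ⟨0, by simp, map_zero _⟩
  | succ n ih =>
    obtain ⟨m', hle, hdeg⟩ := ih (by omega)
    have hlt : m' < m := lt_of_le_of_ne hle (by rintro rfl; omega)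
    obtain ⟨i, hi⟩ := (Finsupp.lt_def.mp hlt).2
    refine ⟨m' + Finsupp.single i 1, fun j => ?_, by rw [map_add, hdeg, Finsupp.degree_single]⟩
    rcases eq_or_ne i j with rfl | hij
    · simpa using hi
    · simpa [Finsupp.single_apply, hij] using hle j

theorem monomial_mem_adjoin_of_degree_eq_mul (N t : ℕ) {m : σ →₀ ℕ} (hm : m.degree = N * t) :
    monomial m (1 : R) ∈ Algebra.adjoin R ((fun m => monomial m 1) '' {m | m.degree = N}) := by
  induction t generalizing m with
  | zero =>
    rw [mul_zero, Finsupp.degree_eq_zero_iff] at hm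
    rw [hm, monomial_zero', C_1]
    exact one_mem _
  | succ t ih =>
    obtain ⟨m', hle, hdeg⟩ := exists_le_degree_eq (n := N) (m := m) (by rw [hm]; nlinarith)
    have hrest : (m - m').degree = N * t := by
      have := congrArg Finsupp.degree (tsub_add_cancel_of_le hle)
      rw [map_add, hm, hdeg] at this
      linarith
    have hsplit : monomial m (1 : R) = monomial (m - m') 1 * monomial m' 1 := by
      rw [monomial_mul, mul_one, tsub_add_cancel_of_le hle]
    rw [hsplit]
    exact mul_mem (ih hrest) (Algebra.subset_adjoin ⟨m', hdeg, rfl⟩)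

theorem mem_adjoin_monomial_of_dvd_degree (N : ℕ) {F : MvPolynomial σ R}
    (hF : ∀ m ∈ F.support, N ∣ m.degree) :
    F ∈ Algebra.adjoin R ((fun m => monomial m 1) '' {m | m.degree = N}) := by
  rw [F.as_sum]
  refine Subalgebra.sum_mem _ fun m hm => ?_
  obtain ⟨t, ht⟩ := hF m hm
  rw [← mul_one (coeff m F), ← smul_eq_mul, ← smul_monomial]
  exact Subalgebra.smul_mem _ (monomial_mem_adjoin_of_degree_eq_mul N t ht) _

theorem image_monomial_degree_eq_three :
    (fun m => monomial m (1 : R)) '' {m : σ →₀ ℕ | m.degree = 3}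
      = {F | ∃ i j l, F = X i * X j * X l} := by
  classical
  ext F
  constructor
  · rintro ⟨m, hm, rfl⟩
    have hcard : Multiset.card (Finsupp.toMultiset m) = 3 := by
      rw [Finsupp.card_toMultiset]; exact hm
    obtain ⟨i, j, l, h⟩ := Multiset.card_eq_three.mp hcard
    refine ⟨i, j, l, ?_⟩
    rw [← Finsupp.toMultiset_toFinsupp m, h]
    simp [X, monomial_mul, ← Multiset.singleton_add, Multiset.toFinsupp_add, add_assoc]
  · rintro ⟨i, j, l, rfl⟩
    refine ⟨Finsupp.single i 1 + Finsupp.single j 1 + Finsupp.single l 1, ?_, ?_⟩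
    · simp only [Set.mem_ofPred_eq, map_add, Finsupp.degree_single]
    · simp only [X, monomial_mul, mul_one]

end Degree

section ScalarInvariants

variable {k : Type*} [Field k] {n d : ℕ}

theorem rowAct_scalar (u : kˣ) :
    rowAct (d := d) (Units.map (algebraMap k (Matrix (Fin n) (Fin n) k)).toMonoidHom u)
      = aeval fun p => C (u : k)⁻¹ * X p := by
  refine algHom_ext fun p => ?_
  rw [rowAct, aeval_X, aeval_X, ← map_inv]
  simp [Matrix.algebraMap_matrix_apply, apply_ite C, ite_mul]

theorem mem_HinvAlg_zpowers_scalar_iff {N : ℕ} {u : kˣ} (hu : IsPrimitiveRoot (u : k) N)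
    {F : MvPolynomial (Fin n × Fin d) k} :
    F ∈ HinvAlg (Subgroup.zpowers
        (Units.map (algebraMap k (Matrix (Fin n) (Fin n) k)).toMonoidHom u))
      ↔ ∀ m ∈ F.support, N ∣ m.degree := by
  constructor
  · intro hF m hm
    have h := congrArg (coeff m) (hF _ (Subgroup.mem_zpowers _))
    rw [rowAct_scalar, coeff_aeval_C_mul_X] at h
    refine (hu.inv.pow_eq_one_iff_dvd _).mp (mul_right_cancel₀ (mem_support_iff.mp hm) ?_)
    rw [h, one_mul]
  · rintro hF _ ⟨z, rfl⟩
    dsimp only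
    rw [← map_zpow, rowAct_scalar]
    ext m
    rw [coeff_aeval_C_mul_X]
    by_cases hm : m ∈ F.support
    · obtain ⟨t, ht⟩ := hF m hm
      have hN : ((u : k) ^ z)⁻¹ ^ N = 1 := by
        rw [inv_pow, ← zpow_natCast, ← zpow_mul, mul_comm, zpow_mul, zpow_natCast,
          hu.pow_eq_one, one_zpow, inv_one]
      rw [ht, Units.val_zpow_eq_zpow_val, pow_mul, hN, one_pow, one_mul]
    · rw [notMem_support_iff.mp hm, mul_zero]

theorem HinvAlg_zpowers_scalar_eq_adjoin {N : ℕ} {u : kˣ} (hu : IsPrimitiveRoot (u : k) N) :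
    HinvAlg (d := d) (Subgroup.zpowers
        (Units.map (algebraMap k (Matrix (Fin n) (Fin n) k)).toMonoidHom u))
      = Algebra.adjoin k ((fun m => monomial m 1) '' {m | m.degree = N}) := by
  refine le_antisymm (fun F hF => mem_adjoin_monomial_of_dvd_degree N
    ((mem_HinvAlg_zpowers_scalar_iff hu).mp hF)) (Algebra.adjoin_le ?_)
  rintro _ ⟨m, hm, rfl⟩
  refine (mem_HinvAlg_zpowers_scalar_iff hu).mpr fun m' hm' => ?_
  rw [Finset.mem_singleton.mp (support_monomial_subset hm')]
  exact dvd_of_eq hm.symm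

end ScalarInvariants

section Commute

variable {k : Type*} [Field k] {n d : ℕ}

theorem rowAct_comp_colAct (h : GL (Fin n) k) (g : GL (Fin d) k) :
    (rowAct h).comp (colAct g) = (colAct g).comp (rowAct h) := by
  refine algHom_ext fun p => ?_
  simp only [AlgHom.comp_apply, rowAct, colAct, aeval_X, map_sum, map_mul, aeval_C,
    algebraMap_eq, Finset.sum_mul, Finset.mul_sum]
  rw [Finset.sum_comm]
  exact Finset.sum_congr rfl fun _ _ => Finset.sum_congr rfl fun _ _ => by ring

theorem rowAct_comp_jmap (hnd : n ≤ d) (h : GL (Fin n) k) :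
    (rowAct h).comp (jmap hnd) = (jmap hnd).comp (rowAct h) := by
  refine algHom_ext fun p => ?_
  simp [rowAct, jmap]

theorem polarized_le_HinvAlg (hnd : n ≤ d) (H : Subgroup (GL (Fin n) k)) :
    polarized hnd H ≤ HinvAlg H := by
  refine Algebra.adjoin_le ?_
  rintro _ ⟨g, f, hf, rfl⟩ h hh
  have hcol := DFunLike.congr_fun (rowAct_comp_colAct h g) (jmap hnd f)
  have hj := DFunLike.congr_fun (rowAct_comp_jmap hnd h) f
  simp only [AlgHom.comp_apply] at hcol hj
  rw [hcol, hj, hf h hh]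

end Commute

theorem apply_mem_of_mem_span₂ {R V W M : Type*} [CommSemiring R] [AddCommMonoid V]
    [AddCommMonoid W] [AddCommMonoid M] [Module R V] [Module R W] [Module R M]
    (B : V →ₗ[R] W →ₗ[R] M) {P : Submodule R M} {s : Set V} {t : Set W}
    (h : ∀ v ∈ s, ∀ w ∈ t, B v w ∈ P) {v : V} {w : W}
    (hv : v ∈ Submodule.span R s) (hw : w ∈ Submodule.span R t) : B v w ∈ P := by
  have hle : Submodule.map₂ B (Submodule.span R s) (Submodule.span R t) ≤ P := by
    rw [Submodule.map₂_span_span, Submodule.span_le]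
    rintro _ ⟨v, hv, w, hw, rfl⟩
    exact h v hv w hw
  exact hle (Submodule.apply_mem_map₂ B hv hw)

theorem exists_distinct_triple_extending {α : Type*} (h : 3 ≤ ENat.card α) (q u v : α) :
    ∃ r w, q ≠ r ∧ q ≠ w ∧ r ≠ w ∧ (u = q ∨ u = r) ∧ (v = q ∨ v = r ∨ v = w) := by
  obtain ⟨r, hqr, hu⟩ : ∃ r, q ≠ r ∧ (u = q ∨ u = r) := by
    by_cases huq : u = q
    · obtain ⟨r, hrq, -⟩ := ENat.exists_ne_ne_of_three_le h q q
      exact ⟨r, hrq.symm, .inl huq⟩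
    · exact ⟨u, Ne.symm huq, .inr rfl⟩
  by_cases hv : v = q ∨ v = r
  · obtain ⟨w, hwq, hwr⟩ := ENat.exists_ne_ne_of_three_le h q r
    exact ⟨r, w, hqr, hwq.symm, hwr.symm, hu, hv.elim .inl (.inr ∘ .inl)⟩
  · push Not at hv
    exact ⟨r, v, hqr, Ne.symm hv.1, Ne.symm hv.2, hu, .inr (.inr rfl)⟩

section Polarization

variable {k : Type*} [Field k] {n d : ℕ}

/-- The linear form `x ↦ (x *ᵥ v) i` on `n × d` matrices, as a function of `v`. -/
noncomputable def rowMulVec (i : Fin n) : (Fin d → k) →ₗ[k] MvPolynomial (Fin n × Fin d) k :=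
  Fintype.linearCombination k fun s => X (i, s)

theorem rowMulVec_single (i : Fin n) (q : Fin d) :
    rowMulVec (k := k) i (Pi.single q 1) = X (i, q) := by
  rw [rowMulVec, Fintype.linearCombination_apply_single, one_smul]

theorem colAct_X (g : GL (Fin d) k) (i : Fin n) (q : Fin d) :
    colAct g (X (i, q)) = rowMulVec i fun s => (g : Matrix (Fin d) (Fin d) k) s q := by
  simp only [colAct, aeval_X, rowMulVec, Fintype.linearCombination_apply, smul_eq_C_mul,
    mul_comm]

theorem det_one_add_single_add_single_add_single {c₀ c₁ c₂ : Fin d} (h₀₁ : c₀ < c₁)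
    (h₀₂ : c₀ < c₂) (h₁₂ : c₁ < c₂) (α β γ : k) :
    (1 + Matrix.single c₀ c₁ α + Matrix.single c₀ c₂ β + Matrix.single c₁ c₂ γ).det = 1 := by
  rw [Matrix.det_of_isUpperTriangular]
  · refine Finset.prod_eq_one fun i _ => ?_
    simp only [Matrix.add_apply, Matrix.one_apply_eq, Matrix.single_apply]
    grind
  · intro i j (hji : j < i)
    simp only [Matrix.add_apply, Matrix.one_apply_ne hji.ne', Matrix.single_apply]
    grind

theorem exists_GL_with_columns {c₀ c₁ c₂ : Fin d} (h₀₁ : c₀ < c₁) (h₀₂ : c₀ < c₂)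
    (h₁₂ : c₁ < c₂) {q r w : Fin d} (hqr : q ≠ r) (hqw : q ≠ w) (hrw : r ≠ w) (α β γ : k) :
    ∃ g : GL (Fin d) k,
      (fun s => (g : Matrix (Fin d) (Fin d) k) s c₀) = Pi.single q 1 ∧
      (fun s => (g : Matrix (Fin d) (Fin d) k) s c₁) = Pi.single r 1 + α • Pi.single q 1 ∧
      (fun s => (g : Matrix (Fin d) (Fin d) k) s c₂)
        = Pi.single w 1 + β • Pi.single q 1 + γ • Pi.single r 1 := by
  obtain ⟨σ, hσ⟩ := Equiv.Perm.exists_extending_pair ![c₀, c₁, c₂] ![q, r, w]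
    (by intro i j; fin_cases i <;> fin_cases j <;>
      simp [h₀₁.ne, h₀₂.ne, h₁₂.ne, h₀₁.ne', h₀₂.ne', h₁₂.ne'])
    (by intro i j; fin_cases i <;> fin_cases j <;>
      simp [hqr, hqw, hrw, hqr.symm, hqw.symm, hrw.symm])
  set U : Matrix (Fin d) (Fin d) k :=
    1 + Matrix.single c₀ c₁ α + Matrix.single c₀ c₂ β + Matrix.single c₁ c₂ γ with hU
  have hdet : (U.submatrix σ.symm id).det ≠ 0 := by
    rw [Matrix.det_permute, hU, det_one_add_single_add_single_add_single h₀₁ h₀₂ h₁₂, mul_one]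
    rcases Int.units_eq_one_or (Equiv.Perm.sign σ.symm) with h | h <;> simp [h]
  have hσ₀ : σ c₀ = q := hσ 0
  have hσ₁ : σ c₁ = r := hσ 1
  have hσ₂ : σ c₂ = w := hσ 2
  refine ⟨.mkOfDetNeZero _ hdet, ?_, ?_, ?_⟩ <;> ext s <;>
    simp [U, Matrix.single_apply, Pi.single_apply, Matrix.one_apply,
      Equiv.eq_symm_apply, hσ₀, hσ₁, hσ₂, h₀₁.ne', h₀₂.ne', h₁₂.ne, h₁₂.ne', eq_comm]

theorem rowMulVec_mul_mem_polarized (hd : 3 ≤ d) {H : Subgroup (GL (Fin 3) k)}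
    {i₁ i₂ i₃ : Fin 3} (hf : X (i₁, 0) * X (i₂, 1) * X (i₃, 2) ∈ HinvAlg (d := 3) H)
    (g : GL (Fin d) k) :
    rowMulVec i₁ (fun s => (g : Matrix (Fin d) (Fin d) k) s (Fin.castLE hd 0))
        * rowMulVec i₂ (fun s => (g : Matrix (Fin d) (Fin d) k) s (Fin.castLE hd 1))
        * rowMulVec i₃ (fun s => (g : Matrix (Fin d) (Fin d) k) s (Fin.castLE hd 2))
      ∈ polarized hd H :=
  Algebra.subset_adjoin ⟨g, _, hf, by simp only [map_mul, jmap, aeval_X, colAct_X]⟩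

theorem X_mul_X_mul_X_mem_polarized_of_ne (hd : 3 ≤ d) {H : Subgroup (GL (Fin 3) k)}
    {i₁ i₂ i₃ : Fin 3} (hf : X (i₁, 0) * X (i₂, 1) * X (i₃, 2) ∈ HinvAlg (d := 3) H)
    {q r w u v : Fin d} (hqr : q ≠ r) (hqw : q ≠ w) (hrw : r ≠ w)
    (hu : u = q ∨ u = r) (hv : v = q ∨ v = r ∨ v = w) :
    X (i₁, q) * X (i₂, u) * X (i₃, v) ∈ polarized hd H := by
  let B := (LinearMap.mul k _).compl₁₂
    ((LinearMap.mulLeft k (X (i₁, q))).comp (rowMulVec i₂)) (rowMulVec (d := d) i₃)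
  let S₂ := Set.range fun α : k => Pi.single r 1 + α • Pi.single q (1 : k)
  let S₃ := Set.range fun βγ : k × k =>
    Pi.single w 1 + βγ.1 • Pi.single q (1 : k) + βγ.2 • Pi.single r 1
  have hB : ∀ v₂ ∈ S₂, ∀ v₃ ∈ S₃, B v₂ v₃ ∈ Subalgebra.toSubmodule (polarized hd H) := by
    rintro _ ⟨α, rfl⟩ _ ⟨⟨β, γ⟩, rfl⟩
    obtain ⟨g, h₀, h₁, h₂⟩ := exists_GL_with_columns (c₀ := Fin.castLE hd 0)
      (c₁ := Fin.castLE hd 1) (c₂ := Fin.castLE hd 2) (by simp [Fin.lt_def])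
      (by simp [Fin.lt_def]) (by simp [Fin.lt_def]) hqr hqw hrw α β γ
    have := rowMulVec_mul_mem_polarized hd hf g
    rwa [h₀, h₁, h₂, rowMulVec_single] at this
  have h₂ : ∀ α : k, Pi.single r 1 + α • Pi.single q (1 : k) ∈ Submodule.span k S₂ :=
    fun α => Submodule.subset_span ⟨α, rfl⟩
  have h₃ : ∀ β γ : k, Pi.single w 1 + β • Pi.single q (1 : k) + γ • Pi.single r 1
      ∈ Submodule.span k S₃ :=
    fun β γ => Submodule.subset_span ⟨(β, γ), rfl⟩
  have hu' : Pi.single u (1 : k) ∈ Submodule.span k S₂ := by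
    rcases hu with rfl | rfl
    · simpa using sub_mem (h₂ 1) (h₂ 0)
    · simpa using h₂ 0
  have hv' : Pi.single v (1 : k) ∈ Submodule.span k S₃ := by
    rcases hv with rfl | rfl | rfl
    · simpa using sub_mem (h₃ 1 0) (h₃ 0 0)
    · simpa using sub_mem (h₃ 0 1) (h₃ 0 0)
    · simpa using h₃ 0 0
  have := apply_mem_of_mem_span₂ B hB hu' hv'
  simpa [B, rowMulVec_single] using this

theorem adjoin_X_mul_X_mul_X_le_polarized (hd : 3 ≤ d) {H : Subgroup (GL (Fin 3) k)}
    (hf : ∀ i₁ i₂ i₃ : Fin 3, X (i₁, 0) * X (i₂, 1) * X (i₃, 2) ∈ HinvAlg (d := 3) H) :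
    Algebra.adjoin k {F : MvPolynomial (Fin 3 × Fin d) k | ∃ i j l, F = X i * X j * X l}
      ≤ polarized hd H := by
  refine Algebra.adjoin_le ?_
  rintro _ ⟨⟨i₁, q⟩, ⟨i₂, u⟩, ⟨i₃, v⟩, rfl⟩
  obtain ⟨r, w, hqr, hqw, hrw, hu, hv⟩ :=
    exists_distinct_triple_extending (by simpa using hd) q u v
  exact X_mul_X_mul_X_mem_polarized_of_ne hd (hf i₁ i₂ i₃) hqr hqw hrw hu hv

end Polarization

/-- Theorem 23(c), second example: `char k = 2`, `H = ⟨a·I₃⟩ ≤ GL_3(k)` with `a` a primitive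
cube root of unity. Then `^H k[M_{3,d}]` is generated by the monomials of total degree 3, and
`GL_d * j(^H k[M_{3,3}]) = ^H k[M_{3,d}]`. -/
theorem stmt14 {k : Type*} [Field k] {d : ℕ} (hd : 3 ≤ d)
    (a : k) (ha : IsPrimitiveRoot a 3)
    (H : Subgroup (GL (Fin 3) k))
    (hH : H = Subgroup.zpowers
      ((Units.map (algebraMap k (Matrix (Fin 3) (Fin 3) k)).toMonoidHom)
        (ha.isUnit (by norm_num)).unit : GL (Fin 3) k)) :
    HinvAlg (d := d) H
        = Algebra.adjoin k
            {F : MvPolynomial (Fin 3 × Fin d) k |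
              ∃ i j l : Fin 3 × Fin d, F = X i * X j * X l} ∧
    polarized hd H = HinvAlg H := by
  have hu : IsPrimitiveRoot (((ha.isUnit (by norm_num)).unit : kˣ) : k) 3 := by
    rwa [IsUnit.unit_spec]
  have hinv (d' : ℕ) : HinvAlg (d := d') H = Algebra.adjoin k
      {F : MvPolynomial (Fin 3 × Fin d') k | ∃ i j l, F = X i * X j * X l} := by
    rw [hH, HinvAlg_zpowers_scalar_eq_adjoin hu, image_monomial_degree_eq_three]
  refine ⟨hinv d, le_antisymm (polarized_le_HinvAlg hd H) ?_⟩
  rw [hinv]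
  exact adjoin_X_mul_X_mul_X_le_polarized hd fun i₁ i₂ i₃ => by
    rw [hinv]
    exact Algebra.subset_adjoin ⟨_, _, _, rfl⟩
end
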